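/- In K_{a,b}^{1/m}, for any vertex z the number of vertices of B whose distance to z differs from the common distance of the rest of B to z is at most 1; equivalently, all but at most one vertex of B are at the same distance from z. -/

import Mathlib

/-- Vertex type of the `m`-fold subdivision of `G`: original vertices (`Sum.inl`)
together with, for each edge `uv` of `G` (represented with `u < v`), internal
vertices `Sum.inr ⟨(u, v, i), _⟩`; the internal vertex with index `i : Fin (m-1)`
is the one at distance `i + 1` from `u` along the thread replacing `uv`. -/
def SubdivVert {V : Type*} [LT V] (G : SimpleGraph V) (m : ℕ) : Type _ :=
  V ⊕ {p : V × V × Fin (m - 1) // p.1 < p.2.1 ∧ G.Adj p.1 p.2.1}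

/-- One-sided adjacency relation generating the `m`-fold subdivision of `G`. -/
def SubdivRel {V : Type*} [LT V] (G : SimpleGraph V) (m : ℕ) :
    SubdivVert G m → SubdivVert G m → Prop
  | Sum.inl a, Sum.inl b => m = 1 ∧ G.Adj a b
  | Sum.inl a, Sum.inr p =>
      (a = p.1.1 ∧ (p.1.2.2 : ℕ) = 0) ∨ (a = p.1.2.1 ∧ (p.1.2.2 : ℕ) + 2 = m)
  | Sum.inr _, Sum.inl _ => False
  | Sum.inr p, Sum.inr q =>
      p.1.1 = q.1.1 ∧ p.1.2.1 = q.1.2.1 ∧ (p.1.2.2 : ℕ) + 1 = (q.1.2.2 : ℕ)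

/-- The `m`-fold subdivision `G^{1/m}` of `G`: each edge of `G` is replaced by a
path of length `m` through `m - 1` new internal vertices. -/
def Subdiv {V : Type*} [LT V] (G : SimpleGraph V) (m : ℕ) :
    SimpleGraph (SubdivVert G m) :=
  SimpleGraph.fromRel (SubdivRel G m)


/-- The complete bipartite graph `K_{a,b}`, on vertex set `Fin (a + b)`.
The part `A` consists of the vertices with value `< a`, and the part `B` of
those with value `≥ a`. -/
def CompBip (a b : ℕ) : SimpleGraph (Fin (a + b)) :=
  SimpleGraph.fromRel fun i j => i.val < a ∧ a ≤ j.val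

lemma compBip_adj {a b : ℕ} {x y : Fin (a + b)} (hx : x.val < a) (hy : a ≤ y.val) :
    (CompBip a b).Adj x y := by
  simp only [CompBip, SimpleGraph.fromRel_adj]
  exact ⟨fun h => by subst h; omega, Or.inl ⟨hx, hy⟩⟩

lemma compBip_lt {a b : ℕ} {x y : Fin (a + b)} (hx : x.val < a) (hy : a ≤ y.val) :
    x < y := by
  rw [Fin.lt_def]; omega


/-!
Swapping two vertices `v₁, v₂` of `B` is an automorphism of `K_{a,b}` that keeps every vertex of
`A` below every vertex of `B`, the order in which threads are oriented, so it lifts to an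
automorphism of the subdivision. When `z` is not `v₁`, `v₂` or internal to a thread ending at one of
them, this lift fixes `z` and exchanges `v₁` and `v₂`, so `d(z, v₁) = d(z, v₂)`. Hence all vertices
of `B` other than the `B`-end of the thread through `z` lie at one distance from `z`.
-/

namespace SimpleGraph

variable {V W : Type*} {G : SimpleGraph V} {H : SimpleGraph W}

lemma Hom.edist_le (f : G →g H) (u v : V) : H.edist (f u) (f v) ≤ G.edist u v := by
  by_cases hr : G.Reachable u v
  · obtain ⟨p, hp⟩ := hr.exists_walk_length_eq_edist
    rw [← hp, ← Walk.length_map f p]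
    exact (p.map f).edist_le
  · rw [edist_eq_top_of_not_reachable hr]
    exact le_top

lemma Iso.edist_eq (e : G ≃g H) (u v : V) : H.edist (e u) (e v) = G.edist u v :=
  le_antisymm (e.toHom.edist_le u v) (by simpa using e.symm.toHom.edist_le (e u) (e v))

lemma Iso.dist_eq (e : G ≃g H) (u v : V) : H.dist (e u) (e v) = G.dist u v := by
  rw [dist, dist, e.edist_eq]

lemma Iso.symm_lt_symm [LinearOrder V] [Preorder W] (e : G ≃g H)
    (he : ∀ ⦃u v⦄, G.Adj u v → u < v → e u < e v) ⦃x y : W⦄ (hxy : H.Adj x y) (hlt : x < y) :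
    e.symm x < e.symm y := by
  have hadj : G.Adj (e.symm x) (e.symm y) := e.symm.map_adj_iff.mpr hxy
  refine hadj.ne.lt_or_gt.resolve_right fun hgt => hlt.not_gt ?_
  simpa using he hadj.symm hgt

end SimpleGraph

open SimpleGraph

section Subdivision

variable {V W : Type*} {G : SimpleGraph V} {H : SimpleGraph W} {m : ℕ}

lemma SubdivRel.ne [LT V] {p q : SubdivVert G m} (h : SubdivRel G m p q) : p ≠ q := by
  rintro rfl
  rcases p with u | p
  · exact h.2.ne rfl
  · exact absurd h.2.2 (by omega)

def SubdivVert.upperEnd [LT V] : SubdivVert G m → V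
  | Sum.inl u => u
  | Sum.inr p => p.1.2.1

-- Threads are stored with their endpoints in increasing order, so only maps keeping the
-- endpoints of every edge in that order act on subdivision vertices.
def SubdivVert.map [LT V] [LT W] (f : G →g H) (hf : ∀ ⦃u v⦄, G.Adj u v → u < v → f u < f v) :
    SubdivVert G m → SubdivVert H m
  | Sum.inl u => Sum.inl (f u)
  | Sum.inr p => Sum.inr ⟨(f p.1.1, f p.1.2.1, p.1.2.2), hf p.2.2 p.2.1, f.map_adj p.2.2⟩

lemma SubdivRel.map [LT V] [LT W] (f : G →g H) (hf : ∀ ⦃u v⦄, G.Adj u v → u < v → f u < f v)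
    {p q : SubdivVert G m} (h : SubdivRel G m p q) :
    SubdivRel H m (SubdivVert.map f hf p) (SubdivVert.map f hf q) := by
  match p, q with
  | Sum.inl _, Sum.inl _ => exact ⟨h.1, f.map_adj h.2⟩
  | Sum.inl _, Sum.inr _ =>
    rcases h with ⟨rfl, hi⟩ | ⟨rfl, hi⟩
    · exact Or.inl ⟨rfl, hi⟩
    · exact Or.inr ⟨rfl, hi⟩
  | Sum.inr _, Sum.inl _ => exact h.elim
  | Sum.inr _, Sum.inr _ => exact ⟨congrArg f h.1, congrArg f h.2.1, h.2.2⟩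

def Subdiv.map [LT V] [LT W] (f : G →g H) (hf : ∀ ⦃u v⦄, G.Adj u v → u < v → f u < f v) :
    Subdiv G m →g Subdiv H m where
  toFun := SubdivVert.map f hf
  map_rel' {p q} hpq := by
    rw [Subdiv, fromRel_adj] at hpq ⊢
    rcases hpq.2 with h | h
    · exact ⟨(h.map f hf).ne, Or.inl (h.map f hf)⟩
    · exact ⟨(h.map f hf).ne.symm, Or.inr (h.map f hf)⟩

lemma SubdivVert.map_symm_map [LinearOrder V] [Preorder W] (e : G ≃g H)
    (he : ∀ ⦃u v⦄, G.Adj u v → u < v → e u < e v) (p : SubdivVert G m) :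
    map e.symm.toHom (e.symm_lt_symm he) (map e.toHom he p) = p := by
  rcases p with u | p <;>
    simp only [map, RelHom.coeFn_mk, RelIso.coe_fn_toEquiv, RelIso.symm_apply_apply, Prod.mk.eta,
      Subtype.coe_eta] <;> rfl

def Subdiv.mapIso [LinearOrder V] [Preorder W] (e : G ≃g H)
    (he : ∀ ⦃u v⦄, G.Adj u v → u < v → e u < e v) : Subdiv G m ≃g Subdiv H m where
  toFun := SubdivVert.map e.toHom he
  invFun := SubdivVert.map e.symm.toHom (e.symm_lt_symm he)
  left_inv := SubdivVert.map_symm_map e he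
  right_inv p := by
    rcases p with u | p <;>
      simp only [SubdivVert.map, RelHom.coeFn_mk, RelIso.coe_fn_toEquiv, RelIso.apply_symm_apply,
        Prod.mk.eta, Subtype.coe_eta] <;> rfl
  map_rel_iff' {p q} := by
    refine ⟨fun h => ?_, (Subdiv.map e.toHom he).map_adj⟩
    simpa only [Subdiv.map, RelHom.coeFn_mk, Equiv.coe_fn_mk, SubdivVert.map_symm_map] using
      (Subdiv.map e.symm.toHom (e.symm_lt_symm he) (m := m)).map_adj h

end Subdivision

section CompleteBipartite

variable {a b m : ℕ}

lemma compBip_adj_iff {x y : Fin (a + b)} :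
    (CompBip a b).Adj x y ↔ (x.val < a ↔ a ≤ y.val) := by
  rw [CompBip, fromRel_adj, Ne, Fin.ext_iff]
  omega

lemma compBip_parts_of_adj_of_lt {x y : Fin (a + b)} (h : (CompBip a b).Adj x y) (hxy : x < y) :
    x.val < a ∧ a ≤ y.val := by
  rw [compBip_adj_iff] at h
  rw [Fin.lt_def] at hxy
  omega

def compBipIsoOfPerm (σ : Equiv.Perm (Fin (a + b))) (hσ : ∀ x, (σ x).val < a ↔ x.val < a) :
    CompBip a b ≃g CompBip a b where
  toEquiv := σ
  map_rel_iff' {x y} := by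
    simp only [compBip_adj_iff, ← not_lt, hσ]

lemma compBipIsoOfPerm_lt_of_adj (σ : Equiv.Perm (Fin (a + b)))
    (hσ : ∀ x, (σ x).val < a ↔ x.val < a) ⦃u v : Fin (a + b)⦄ (huv : (CompBip a b).Adj u v)
    (hlt : u < v) : compBipIsoOfPerm σ hσ u < compBipIsoOfPerm σ hσ v := by
  obtain ⟨hu, hv⟩ := compBip_parts_of_adj_of_lt huv hlt
  exact compBip_lt ((hσ u).2 hu) (not_lt.1 fun h => (not_lt.2 hv) ((hσ v).1 h))

lemma val_swap_lt_iff {v₁ v₂ : Fin (a + b)} (h₁ : a ≤ v₁.val) (h₂ : a ≤ v₂.val)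
    (x : Fin (a + b)) : (Equiv.swap v₁ v₂ x).val < a ↔ x.val < a := by
  rw [Equiv.swap_apply_def]
  split_ifs <;> subst_vars <;> omega

lemma compBip_subdiv_dist_eq_of_ne_upperEnd (z : SubdivVert (CompBip a b) m)
    {v₁ v₂ : Fin (a + b)} (hv₁ : a ≤ v₁.val) (hv₂ : a ≤ v₂.val) (hz₁ : v₁ ≠ z.upperEnd)
    (hz₂ : v₂ ≠ z.upperEnd) :
    (Subdiv (CompBip a b) m).dist z (Sum.inl v₁) =
      (Subdiv (CompBip a b) m).dist z (Sum.inl v₂) := by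
  let σ := Equiv.swap v₁ v₂
  have hσA : ∀ x, (σ x).val < a ↔ x.val < a := val_swap_lt_iff hv₁ hv₂
  let e := Subdiv.mapIso (m := m) (compBipIsoOfPerm σ hσA) (compBipIsoOfPerm_lt_of_adj σ hσA)
  have hfix : ∀ x, x ≠ v₁ → x ≠ v₂ → σ x = x := fun x h₁ h₂ => Equiv.swap_apply_of_ne_of_ne h₁ h₂
  have hez : e z = z := by
    rcases z with w | ⟨⟨u, w, i⟩, hlt, hadj⟩
    · exact congrArg Sum.inl (hfix w hz₁.symm hz₂.symm)
    · have hu : u.val < a := (compBip_parts_of_adj_of_lt hadj hlt).1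
      have hσu : σ u = u := hfix u (by rintro rfl; omega) (by rintro rfl; omega)
      refine congrArg Sum.inr (Subtype.ext ?_)
      simp only [compBipIsoOfPerm, RelHom.coeFn_mk, hσu, hfix w hz₁.symm hz₂.symm]
  have hev : e (Sum.inl v₁) = Sum.inl v₂ := congrArg Sum.inl (Equiv.swap_apply_left v₁ v₂)
  have h := e.dist_eq z (Sum.inl v₁)
  rw [hez, hev] at h
  exact h.symm

end CompleteBipartite

theorem compBip_subdiv_all_but_one_equidistant_general (a b m : ℕ)
    (z : SubdivVert (CompBip a b) m) :
    ∃ (d : ℕ) (w : Fin (a + b)), ∀ v : Fin (a + b), a ≤ v.val → v ≠ w →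
      (Subdiv (CompBip a b) m).dist z (Sum.inl v) = d := by
  by_cases h : ∃ c : Fin (a + b), a ≤ c.val ∧ c ≠ z.upperEnd
  · obtain ⟨c, hc, hcz⟩ := h
    exact ⟨_, z.upperEnd, fun v hv hvz => compBip_subdiv_dist_eq_of_ne_upperEnd z hv hc hvz hcz⟩
  · push Not at h
    exact ⟨0, z.upperEnd, fun v hv hvz => absurd (h v hv) hvz⟩

/-- In `K_{a,b}^{1/m}` (with `a ≥ 2`, `b ≥ 3`, `m ≥ 1`), for any vertex `z` all but
at most one of the original vertices of `B` are at the same distance from `z`. -/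
theorem compBip_subdiv_all_but_one_equidistant (a b m : ℕ)
    (ha : 2 ≤ a) (hb : 3 ≤ b) (hm : 1 ≤ m)
    (z : SubdivVert (CompBip a b) m) :
    ∃ (d : ℕ) (w : Fin (a + b)), ∀ v : Fin (a + b), a ≤ v.val → v ≠ w →
      (Subdiv (CompBip a b) m).dist z (Sum.inl v) = d :=
  compBip_subdiv_all_but_one_equidistant_general a b m z
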